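/- Let b ≥ 2 be an integer with prime factorization b = p₁^{a₁} p₂^{a₂} ⋯ p_r^{a_r} with r ≥ 2 distinct primes, ordered so that a₁(p₁−1) > a_i(p_i−1) for all i ≥ 2, and let b' = b / p₁^{a₁}. Then for all sufficiently large n, ℓ_b(n!) · (b')^{v_{p₁^{a₁}}(n!)} ≡ ℓ_{p₁^{a₁}}(n!) (mod p₁^{a₁}). -/

import Mathlib

/-- The state reached after feeding the base-`k` digits of `n`
(most significant digit first, empty string for `n = 0`) into the
transition function `ρ` starting from state `q₀`. -/
def autoRun {Q : Type} (k : ℕ) (ρ : Q → Fin k → Q) (q₀ : Q) (n : ℕ) : Q :=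
  (Nat.digits k n).reverse.foldl (fun q d => if h : d < k then ρ q ⟨d, h⟩ else q) q₀

/-- A sequence `a : ℕ → Δ` is `k`-automatic: some DFAO over the alphabet
`{0, …, k-1}` computes `a n` from the base-`k` digits of `n`
(most significant digit first). -/
def IsAutomatic {Δ : Type*} (k : ℕ) (a : ℕ → Δ) : Prop :=
  ∃ (Q : Type) (_ : Finite Q) (ρ : Q → Fin k → Q) (q₀ : Q) (τ : Q → Δ),
    ∀ n : ℕ, a n = τ (autoRun k ρ q₀ n)

/-- `lnz b n` is the last nonzero digit of `n` in base `b`: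
`(n / b ^ v_b(n)) % b`, where `v_b(n) = padicValNat b n` is the largest `t`
with `b ^ t ∣ n`. -/
def lnz (b n : ℕ) : ℕ := (n / b ^ padicValNat b n) % b

/-- `digSum b n` is the sum of the digits of `n` written in base `b`. -/
def digSum (b n : ℕ) : ℕ := (Nat.digits b n).sum

/-!
Write `q = p₀ ^ a₀` and `V = v_q(n!) = ⌊v_{p₀}(n!) / a₀⌋`. Legendre's formula
`(p - 1) v_p(n!) = n - s_p(n)`, with digit sums `s_p(n) = O(log n)`, and the strict maximality of
`a₀ (p₀ - 1)` give `a_i V ≤ v_{p_i}(n!)` for every `i` once `n` is large. Then `b ^ V ∣ n!` while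
`q ^ (V + 1) ∤ n!`, so `v_b(n!) = v_q(n!) = V`. Writing `n! = b ^ V c`, we get `n! / b ^ V = c`
and `n! / q ^ V = b' ^ V c`, so both sides of the congruence are `c b' ^ V` modulo `q`.
-/

open Filter Asymptotics

theorem digSum_le_mul_log_add_one {p : ℕ} (hp : 1 < p) (n : ℕ) :
    digSum p n ≤ (p - 1) * (Nat.log p n + 1) := by
  rcases eq_or_ne n 0 with rfl | hn
  · simp [digSum]
  have := List.sum_le_card_nsmul (Nat.digits p n) (p - 1)
    fun d hd => Nat.le_sub_one_of_lt (Nat.digits_lt_base hp hd)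
  rwa [Nat.length_digits p n hp hn, smul_eq_mul, mul_comm] at this

theorem eventually_mul_log_add_one_le (b C : ℕ) :
    ∀ᶠ n : ℕ in atTop, C * (Nat.log b n + 1) ≤ n := by
  have hlittle : (fun x : ℝ => C * (Real.logb b x + 1)) =o[atTop] id := by
    simp only [Real.logb, mul_add, mul_one, mul_div_assoc']
    simp only [mul_div_right_comm _ (Real.log _)]
    exact (Real.isLittleO_log_id_atTop.const_mul_left _).add (isLittleO_const_id_atTop _)
  have hreal : ∀ᶠ x : ℝ in atTop, C * (Real.logb b x + 1) ≤ x := by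
    filter_upwards [hlittle.bound one_pos, eventually_ge_atTop 0] with x hx hx0
    simpa [abs_of_nonneg hx0] using (le_abs_self _).trans hx
  filter_upwards [tendsto_natCast_atTop_atTop.eventually hreal] with n hn
  have hlog : (C : ℝ) * (Nat.log b n + 1) ≤ C * (Real.logb b n + 1) := by
    gcongr
    exact Real.natLog_le_logb n b
  exact_mod_cast hlog.trans hn

theorem eventually_mul_digSum_le {p : ℕ} (hp : 1 < p) (K : ℕ) :
    ∀ᶠ n : ℕ in atTop, K * digSum p n ≤ n := by
  filter_upwards [eventually_mul_log_add_one_le p (K * (p - 1))] with n hn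
  calc K * digSum p n ≤ K * ((p - 1) * (Nat.log p n + 1)) :=
        Nat.mul_le_mul_left K (digSum_le_mul_log_add_one hp n)
    _ = K * (p - 1) * (Nat.log p n + 1) := (mul_assoc _ _ _).symm
    _ ≤ n := hn

theorem sub_one_mul_padicValNat_factorial_add_digSum {p : ℕ} [Fact p.Prime] (n : ℕ) :
    (p - 1) * padicValNat p n.factorial + digSum p n = n := by
  rw [sub_one_mul_padicValNat_factorial, digSum, Nat.sub_add_cancel (Nat.digit_sum_le p n)]

theorem mul_padicValNat_factorial_div_le {p p₀ a a₀ : ℕ} (hp : p.Prime) (hp₀ : p₀.Prime)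
    (hlt : a * (p - 1) < a₀ * (p₀ - 1)) :
    ∀ᶠ n : ℕ in atTop, a * (padicValNat p₀ n.factorial / a₀) ≤ padicValNat p n.factorial := by
  have : Fact p.Prime := ⟨hp⟩
  have : Fact p₀.Prime := ⟨hp₀⟩
  set A := a₀ * (p₀ - 1)
  have ha₀ : 0 < a₀ := Nat.pos_of_ne_zero fun h => by simp [A, h] at hlt
  have hp_pos : 0 < p - 1 := Nat.sub_pos_of_lt hp.one_lt
  have hp₀_pos : 0 < p₀ - 1 := Nat.sub_pos_of_lt hp₀.one_lt
  filter_upwards [eventually_mul_digSum_le hp.one_lt (2 * A),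
    eventually_mul_digSum_le hp₀.one_lt 2] with n hs hs₀
  set v := padicValNat p n.factorial
  set v₀ := padicValNat p₀ n.factorial
  set W := v₀ / a₀
  have hv : (p - 1) * v + digSum p n = n := sub_one_mul_padicValNat_factorial_add_digSum n
  have hv₀ : (p₀ - 1) * v₀ + digSum p₀ n = n := sub_one_mul_padicValNat_factorial_add_digSum n
  have hsW : digSum p n ≤ W := by
    by_contra! h
    have : (p₀ - 1) * v₀ < A * digSum p n := calc
      (p₀ - 1) * v₀ < (p₀ - 1) * (a₀ * (W + 1)) :=
          Nat.mul_lt_mul_of_pos_left (Nat.lt_mul_div_succ v₀ ha₀) hp₀_pos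
      _ = A * (W + 1) := by ring
      _ ≤ A * digSum p n := Nat.mul_le_mul_left A h
    linarith
  have hAW : A * W ≤ (p₀ - 1) * v₀ := calc
    A * W = (p₀ - 1) * (a₀ * W) := by ring
    _ ≤ (p₀ - 1) * v₀ := Nat.mul_le_mul_left _ (Nat.mul_div_le v₀ a₀)
  have hBW : (a * (p - 1) + 1) * W ≤ A * W := Nat.mul_le_mul_right W hlt
  refine Nat.le_of_mul_le_mul_left ?_ hp_pos
  linarith

theorem padicValNat_pow_eq_div {p a m : ℕ} (hp : p ≠ 1) (ha : a ≠ 0) (hm : m ≠ 0) :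
    padicValNat (p ^ a) m = padicValNat p m / a := by
  have hpa : p ^ a ≠ 1 := by simp [hp, ha]
  refine eq_of_forall_le_iff fun k => ?_
  rw [← padicValNat_dvd_iff_le_of_ne_one hpa hm, Nat.le_div_iff_mul_le (Nat.pos_of_ne_zero ha),
    ← padicValNat_dvd_iff_le_of_ne_one hp hm, ← pow_mul, mul_comm]

theorem padicValNat_mul_eq_of_pow_dvd {q b' m : ℕ} (hq : q ≠ 1) (hm : m ≠ 0)
    (h : (q * b') ^ padicValNat q m ∣ m) : padicValNat (q * b') m = padicValNat q m := by
  have hqb' : q * b' ≠ 1 := fun h1 => hq (Nat.eq_one_of_mul_eq_one_right h1)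
  refine le_antisymm ?_ ((padicValNat_dvd_iff_le_of_ne_one hqb' hm).mp h)
  rw [← padicValNat_dvd_iff_le_of_ne_one hq hm]
  exact (pow_dvd_pow_of_dvd (dvd_mul_right q b') _).trans pow_padicValNat_dvd

theorem lnz_mul_mul_pow_modEq_lnz {q b' m : ℕ}
    (h : padicValNat (q * b') m = padicValNat q m) :
    lnz (q * b') m * b' ^ padicValNat q m ≡ lnz q m [MOD q] := by
  set V := padicValNat q m
  obtain ⟨c, hc⟩ : (q * b') ^ V ∣ m := h ▸ pow_padicValNat_dvd
  rcases eq_or_ne ((q * b') ^ V) 0 with h0 | h0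
  · simp [lnz, hc, h0, Nat.ModEq]
  have hq0 : q ^ V ≠ 0 := by rw [mul_pow] at h0; exact left_ne_zero_of_mul h0
  have hmq : m / q ^ V = b' ^ V * c := by
    rw [hc, mul_pow, mul_assoc, Nat.mul_div_cancel_left _ (Nat.pos_of_ne_zero hq0)]
  rw [lnz, lnz, h, hmq, hc, Nat.mul_div_cancel_left _ (Nat.pos_of_ne_zero h0), mul_comm _ c]
  exact ((Nat.mod_modEq c _).of_dvd (dvd_mul_right q b')).mul_right _ |>.trans
    (Nat.mod_modEq _ q).symm

theorem prod_pow_dvd_of_forall_pow_dvd {ι : Type*} [Fintype ι] {p : ι → ℕ}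
    (hp : ∀ i, (p i).Prime) (hpinj : Function.Injective p) {e : ι → ℕ} {m : ℕ}
    (h : ∀ i, p i ^ e i ∣ m) : ∏ i, p i ^ e i ∣ m := by
  have hcop : Pairwise (Function.onFun IsCoprime fun i => ((p i ^ e i : ℕ) : ℤ)) :=
    fun i j hij => Nat.isCoprime_iff_coprime.mpr
      (((Nat.coprime_primes (hp i) (hp j)).mpr (hpinj.ne hij)).pow _ _)
  exact_mod_cast Fintype.prod_dvd_of_coprime hcop fun i => Int.natCast_dvd_natCast.mpr (h i)

/-- Let `b = ∏ i, p i ^ a i` with `r ≥ 2` distinct primes, ordered so that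
`a 0 * (p 0 - 1) > a i * (p i - 1)` for all `i ≠ 0`, and let
`b' = b / p 0 ^ a 0`.  Then for all sufficiently large `n`,
`ℓ_b (n !) * b' ^ v_{p 0 ^ a 0} (n !) ≡ ℓ_{p 0 ^ a 0} (n !) [MOD p 0 ^ a 0]`. -/
theorem lnz_factorial_congruence_of_strict_max (b r : ℕ) (hr : 2 ≤ r)
    (p a : Fin r → ℕ) (hp : ∀ i, (p i).Prime) (hpinj : Function.Injective p)
    (ha : ∀ i, 0 < a i) (hfac : b = ∏ i, p i ^ a i)
    (hmax : ∀ i : Fin r, i ≠ ⟨0, by omega⟩ →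
      a i * (p i - 1) < a ⟨0, by omega⟩ * (p ⟨0, by omega⟩ - 1))
    (b' : ℕ) (hb' : b' = b / p ⟨0, by omega⟩ ^ a ⟨0, by omega⟩) :
    ∃ N : ℕ, ∀ n : ℕ, N ≤ n →
      lnz b (Nat.factorial n) *
          b' ^ padicValNat (p ⟨0, by omega⟩ ^ a ⟨0, by omega⟩) (Nat.factorial n) ≡
        lnz (p ⟨0, by omega⟩ ^ a ⟨0, by omega⟩) (Nat.factorial n)
          [MOD p ⟨0, by omega⟩ ^ a ⟨0, by omega⟩] := by
  set i₀ : Fin r := ⟨0, by omega⟩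
  set q := p i₀ ^ a i₀
  have hq : q ≠ 1 := (Nat.one_lt_pow (ha i₀).ne' (hp i₀).one_lt).ne'
  have hbq : b = q * b' := by
    rw [hb', Nat.mul_div_cancel' (hfac ▸ Finset.dvd_prod_of_mem _ (Finset.mem_univ i₀))]
  have hval : ∀ᶠ n : ℕ in atTop, ∀ i, a i * (padicValNat (p i₀) n.factorial / a i₀) ≤
      padicValNat (p i) n.factorial := by
    refine eventually_all.mpr fun i => ?_
    by_cases hi : i = i₀
    · exact .of_forall fun n => hi ▸ Nat.mul_div_le _ _
    · exact mul_padicValNat_factorial_div_le (hp i) (hp i₀) (hmax i hi)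
  obtain ⟨N, hN⟩ := eventually_atTop.mp hval
  refine ⟨N, fun n hn => ?_⟩
  have hV : padicValNat q n.factorial = padicValNat (p i₀) n.factorial / a i₀ :=
    padicValNat_pow_eq_div (hp i₀).ne_one (ha i₀).ne' n.factorial_ne_zero
  have hdvd : b ^ padicValNat q n.factorial ∣ n.factorial := by
    rw [hfac, ← Finset.prod_pow]
    simp_rw [← pow_mul]
    exact prod_pow_dvd_of_forall_pow_dvd hp hpinj fun i =>
      (pow_dvd_pow _ (hV ▸ hN n hn i)).trans pow_padicValNat_dvd
  rw [hbq] at hdvd ⊢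
  exact lnz_mul_mul_pow_modEq_lnz (padicValNat_mul_eq_of_pow_dvd hq n.factorial_ne_zero hdvd)
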